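/- Shift-invariance of the linear components space: let H : F_2^{2b} → F_2^{2b} be the superposition S-box of two CA with nonlinear bipermutive rules f, g of diameter b+1. Suppose v = (v_1,…,v_b,v_{b+1},…,v_{2b}) is nonzero, v·H is affine, and v_b = v_{2b} = 0. Then the vector v' obtained by shifting each half of v one position to the right (v'_{i+1} = v_i for 1 ≤ i ≤ b−1, v'_1 = 0; v'_{b+i+1} = v_{b+i} for 1 ≤ i ≤ b−1, v'_{b+1} = 0) also yields an affine component v'·H. -/

import Mathlib

/-- The binary Möbius transform, giving the ANF coefficients of `f`. -/
def moebius {n : ℕ} (f : (Fin n → ZMod 2) → ZMod 2) : (Fin n → ZMod 2) → ZMod 2 :=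
  fun u => ∑ x ∈ Finset.univ.filter (fun x : Fin n → ZMod 2 => ∀ i, x i ≠ 0 → u i ≠ 0), f x

/-- The algebraic degree of a Boolean function. -/
def degB {n : ℕ} (f : (Fin n → ZMod 2) → ZMod 2) : ℕ :=
  (Finset.univ.filter (fun u : Fin n → ZMod 2 => moebius f u ≠ 0)).sup
    (fun u => (Finset.univ.filter (fun i => u i ≠ 0)).card)

/-- A Boolean function is affine if it is of the form `x ↦ a·x ⊕ c`. -/
def IsAffine {n : ℕ} (g : (Fin n → ZMod 2) → ZMod 2) : Prop :=
  ∃ (a : Fin n → ZMod 2) (c : ZMod 2), ∀ x, g x = (∑ i, a i * x i) + c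

/-!
Both halves of `H` are sliding windows, so shifting the index of an output coordinate by one
is the same as shifting the input by one: `H x (i + 1) = H (x ∘ finRotate _) i` whenever `i + 1`
stays in the same half (the rotation never wraps around inside such a window). Hence
`v'·H x = v·H (x ∘ finRotate _)`, and precomposing an affine function with a coordinate
permutation keeps it affine.
-/

theorem IsAffine.comp_equiv {k n : ℕ} {g : (Fin k → ZMod 2) → ZMod 2} (hg : IsAffine g)
    (e : Fin k ≃ Fin n) : IsAffine fun x => g (x ∘ e) := by
  obtain ⟨a, c, hac⟩ := hg
  refine ⟨a ∘ e.symm, c, fun x => ?_⟩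
  show g (x ∘ e) = _
  rw [hac, ← e.symm.sum_comp]
  simp

theorem Fin.sum_eq_sum_of_succ_eq_castSucc {M : Type*} [AddCommMonoid M] {m : ℕ}
    {F G : Fin (m + 1) → M} (hG : G 0 = 0) (hF : F (Fin.last m) = 0)
    (h : ∀ i : Fin m, G i.succ = F i.castSucc) : ∑ i, G i = ∑ i, F i := by
  rw [Fin.sum_univ_succ, Fin.sum_univ_castSucc, hG, hF, zero_add, add_zero]
  exact Finset.sum_congr rfl fun i _ => h i

theorem finRotate_mk_of_add_one_lt {n k : ℕ} (h : k + 1 < n) :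
    finRotate n ⟨k, by omega⟩ = ⟨k + 1, h⟩ := by
  obtain ⟨n, rfl⟩ : ∃ n', n = n' + 1 := ⟨n - 1, by omega⟩
  exact finRotate_of_lt (by omega)

/-- `H` is the superposition S-box of the cellular automata with local rules `f` and `g`,
with `b = m + 1`. -/
def IsSuperpositionSBox {α β : Type*} {m : ℕ} (f g : (Fin (m + 2) → α) → β)
    (H : (Fin ((m + 1) + (m + 1)) → α) → Fin ((m + 1) + (m + 1)) → β) : Prop :=
  ∀ x (i : Fin (m + 1)),
    H x (Fin.castAdd (m + 1) i) =
      f (fun j : Fin (m + 2) => x ⟨i.val + j.val, by omega⟩) ∧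
    H x (Fin.natAdd (m + 1) i) =
      g (fun j : Fin (m + 2) => x ⟨i.val + j.val, by omega⟩)

namespace IsSuperpositionSBox

variable {α β : Type*} {m : ℕ} {f g : (Fin (m + 2) → α) → β}
  {H : (Fin ((m + 1) + (m + 1)) → α) → Fin ((m + 1) + (m + 1)) → β}

theorem window_succ_eq_rotate (x : Fin ((m + 1) + (m + 1)) → α) (i : Fin m) :
    (fun j : Fin (m + 2) => x ⟨i.succ.val + j.val, by simp; omega⟩) =
    fun j : Fin (m + 2) => (x ∘ finRotate _) ⟨i.castSucc.val + j.val, by simp; omega⟩ := by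
  funext j
  rw [Function.comp_apply, finRotate_mk_of_add_one_lt (by simp; omega)]
  simp only [Fin.val_succ, Fin.val_castSucc]
  congr 2
  omega

theorem apply_castAdd_succ (hH : IsSuperpositionSBox f g H) (x) (i : Fin m) :
    H x (Fin.castAdd (m + 1) i.succ) = H (x ∘ finRotate _) (Fin.castAdd (m + 1) i.castSucc) := by
  rw [(hH x i.succ).1, (hH _ i.castSucc).1, window_succ_eq_rotate]

theorem apply_natAdd_succ (hH : IsSuperpositionSBox f g H) (x) (i : Fin m) :
    H x (Fin.natAdd (m + 1) i.succ) = H (x ∘ finRotate _) (Fin.natAdd (m + 1) i.castSucc) := by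
  rw [(hH x i.succ).2, (hH _ i.castSucc).2, window_succ_eq_rotate]

theorem component_shift [Semiring β] (hH : IsSuperpositionSBox f g H)
    {v v' : Fin ((m + 1) + (m + 1)) → β}
    (hvb : v (Fin.castAdd (m + 1) (Fin.last m)) = 0)
    (hv2b : v (Fin.natAdd (m + 1) (Fin.last m)) = 0)
    (hv'0 : v' (Fin.castAdd (m + 1) 0) = 0)
    (hv'b0 : v' (Fin.natAdd (m + 1) 0) = 0)
    (hv'L : ∀ i : Fin m, v' (Fin.castAdd (m + 1) i.succ) = v (Fin.castAdd (m + 1) i.castSucc))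
    (hv'R : ∀ i : Fin m, v' (Fin.natAdd (m + 1) i.succ) = v (Fin.natAdd (m + 1) i.castSucc))
    (x : Fin ((m + 1) + (m + 1)) → α) :
    ∑ i, v' i * H x i = ∑ i, v i * H (x ∘ finRotate _) i := by
  rw [Fin.sum_univ_add (a := m + 1), Fin.sum_univ_add (a := m + 1)]
  refine congrArg₂ (· + · : β → β → β) ?_ ?_ <;>
    refine Fin.sum_eq_sum_of_succ_eq_castSucc ?_ ?_ fun i => ?_
  · rw [hv'0, zero_mul]
  · rw [hvb, zero_mul]
  · rw [hv'L, hH.apply_castAdd_succ]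
  · rw [hv'b0, zero_mul]
  · rw [hv2b, zero_mul]
  · rw [hv'R, hH.apply_natAdd_succ]

end IsSuperpositionSBox

/-- Right-shift invariance of the linear components space of a superposition
S-box: if `v·H` is affine and the last coordinate of each half of `v` is zero,
then the vector `v'` obtained by shifting each half of `v` one position to the
right also yields an affine component `v'·H` (here `b = m + 1`). -/
theorem lcs_right_shift_invariant (m : ℕ)
    (f g : (Fin (m + 2) → ZMod 2) → ZMod 2)
    (H : (Fin ((m + 1) + (m + 1)) → ZMod 2) → Fin ((m + 1) + (m + 1)) → ZMod 2)
    (hH : ∀ x (i : Fin (m + 1)),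
      H x (Fin.castAdd (m + 1) i) =
        f (fun j : Fin (m + 2) => x ⟨i.val + j.val, by have := i.isLt; have := j.isLt; omega⟩) ∧
      H x (Fin.natAdd (m + 1) i) =
        g (fun j : Fin (m + 2) => x ⟨i.val + j.val, by have := i.isLt; have := j.isLt; omega⟩))
    (v : Fin ((m + 1) + (m + 1)) → ZMod 2)
    (hlin : IsAffine (fun x => ∑ i, v i * H x i))
    (hvb : v (Fin.castAdd (m + 1) (Fin.last m)) = 0)
    (hv2b : v (Fin.natAdd (m + 1) (Fin.last m)) = 0)
    (v' : Fin ((m + 1) + (m + 1)) → ZMod 2)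
    (hv'0 : v' (Fin.castAdd (m + 1) 0) = 0)
    (hv'b0 : v' (Fin.natAdd (m + 1) 0) = 0)
    (hv'L : ∀ i : Fin m, v' (Fin.castAdd (m + 1) i.succ) = v (Fin.castAdd (m + 1) i.castSucc))
    (hv'R : ∀ i : Fin m, v' (Fin.natAdd (m + 1) i.succ) = v (Fin.natAdd (m + 1) i.castSucc)) :
    IsAffine (fun x => ∑ i, v' i * H x i) := by
  have hSBox : IsSuperpositionSBox f g H := hH
  simp_rw [hSBox.component_shift hvb hv2b hv'0 hv'b0 hv'L hv'R]
  exact hlin.comp_equiv _
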